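/- arXiv:2308.12255 — 3 statements merged into one kernel-verified Lean document; each statement's English description precedes it below -/
import Mathlib

section
/- Suppose c_{L,-} and c_{L,+} satisfy the termination condition e^{+α_L/2}·c_{L,-} + e^{-α_L/2}·c_{L,+} = 0, and c₀ is related to c_L by the recursion of the layerwise-constant PML model (c_{L,-} = (∏_{l=0}^{L-1} e^{+α_l/2}/e^{-α_{l+1}/2})·c_{0,-}, c_{L,+} = (∏_{l=0}^{L-1} e^{-α_l/2}/e^{+α_{l+1}/2})·c_{0,+}). If c_{0,+} ≠ 0, then the reflection coefficient satisfies c_{0,-}/c_{0,+} = -e^{-α₀}·∏_{l=1}^{L} (e^{-α_l})². -/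
/-!
Each layer multiplies the down-going amplitude by `exp t_l` and the up-going one by `exp (-t_l)`,
with `t_l = (α_l + α_{l+1}) / 2`, so with `S = ∑ t_l` the termination condition reads
`exp u * c0m + exp (-u) * c0p = 0` for `u = α_L / 2 + S`, giving `c0m / c0p = -exp (-2u)`.
The sum `2u` telescopes to `α_0 + 2 ∑_{l=1}^{L} α_l`.
-/

open Complex Finset

theorem sum_range_add_succ_add_eq {M : Type*} [AddCommMonoid M] (f : ℕ → M) (L : ℕ) :
    ∑ l ∈ range L, (f l + f (l + 1)) + f L = f 0 + 2 • ∑ l ∈ Icc 1 L, f l := by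
  induction L with
  | zero => simp
  | succ n ih =>
    rw [sum_range_succ, sum_Icc_succ_top (by omega), smul_add, ← add_assoc (f 0), ← ih]
    abel

theorem div_eq_neg_exp_of_exp_mul_add_exp_neg_mul_eq_zero {x y u : ℂ}
    (h : exp u * x + exp (-u) * y = 0) (hy : y ≠ 0) : x / y = -exp (-2 * u) := by
  have hx : x = -exp (-2 * u) * y := by
    have : exp u * (x + exp (-2 * u) * y) = 0 := by
      rw [← h, mul_add, ← mul_assoc, ← exp_add]
      ring_nf
    simpa [exp_ne_zero, add_eq_zero_iff_eq_neg] using this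
  rw [hx, mul_div_cancel_right₀ _ hy]

theorem prod_exp_div_exp {ι : Type*} (s : Finset ι) (a b : ι → ℂ) :
    ∏ i ∈ s, exp (a i) / exp (b i) = exp (∑ i ∈ s, (a i - b i)) := by
  simp only [exp_sum, exp_sub]

theorem stmt4_general (L : ℕ) (α : ℕ → ℂ) (c0m c0p cLm cLp : ℂ)
    (hterm : Complex.exp (α L / 2) * cLm + Complex.exp (-(α L) / 2) * cLp = 0)
    (hm : cLm = (∏ l ∈ Finset.range L,
      Complex.exp (α l / 2) / Complex.exp (-(α (l + 1)) / 2)) * c0m)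
    (hp : cLp = (∏ l ∈ Finset.range L,
      Complex.exp (-(α l) / 2) / Complex.exp (α (l + 1) / 2)) * c0p)
    (hc : c0p ≠ 0) :
    c0m / c0p = -Complex.exp (-(α 0)) * ∏ l ∈ Finset.Icc 1 L, (Complex.exp (-(α l)))^2 := by
  set S := ∑ l ∈ range L, (α l + α (l + 1)) / 2
  have hm' : cLm = exp S * c0m := by
    rw [hm, prod_exp_div_exp]
    congr 2
    exact sum_congr rfl fun l _ => by ring
  have hp' : cLp = exp (-S) * c0p := by
    rw [hp, prod_exp_div_exp, ← sum_neg_distrib]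
    congr 2
    exact sum_congr rfl fun l _ => by ring
  have hrefl : exp (α L / 2 + S) * c0m + exp (-(α L / 2 + S)) * c0p = 0 := by
    rw [← hterm, hm', hp', neg_add, exp_add, exp_add]
    ring_nf
  have hexponent : -2 * (α L / 2 + S) = -α 0 + ∑ l ∈ Icc 1 L, -(α l) * 2 := by
    have h := sum_range_add_succ_add_eq α L
    rw [nsmul_eq_mul] at h
    simp only [S, ← sum_div, sum_neg_distrib, ← sum_mul]
    linear_combination -h
  rw [div_eq_neg_exp_of_exp_mul_add_exp_neg_mul_eq_zero hrefl hc, hexponent, exp_add, exp_sum,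
    neg_mul]
  congr 2
  exact prod_congr rfl fun l _ => by rw [sq, ← exp_add, ← two_mul, mul_comm]

theorem stmt4 (L : ℕ) (hL : 1 ≤ L) (α : ℕ → ℂ) (c0m c0p cLm cLp : ℂ)
    (hterm : Complex.exp (α L / 2) * cLm + Complex.exp (-(α L) / 2) * cLp = 0)
    (hm : cLm = (∏ l ∈ Finset.range L,
      Complex.exp (α l / 2) / Complex.exp (-(α (l + 1)) / 2)) * c0m)
    (hp : cLp = (∏ l ∈ Finset.range L,
      Complex.exp (-(α l) / 2) / Complex.exp (α (l + 1) / 2)) * c0p)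
    (hc : c0p ≠ 0) :
    c0m / c0p = -Complex.exp (-(α 0)) * ∏ l ∈ Finset.Icc 1 L, (Complex.exp (-(α l)))^2 :=
  stmt4_general L α c0m c0p cLm cLp hterm hm hp hc
end

section
/- For s ∈ ℂ with Re(s) > 0, k ∈ ℝ, and γ the principal branch of √(s² + k²) chosen so that γ = +k when s = 0 (equivalently, Re(γ) > 0 on this branch), one has Re(γ/(a·s + b)) > 0 for all real a, b > 0. -/
/-!
Write `w = a s + b`. Then `Re (γ / w)` has the sign of `Re (γ * conj w) = γ.re * w.re + γ.im * w.im`.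
Comparing imaginary parts in `γ² = s² + k²` gives `γ.re * γ.im = s.re * s.im`, so multiplying by
`γ.re > 0` turns this into `γ.re² * (a s.re + b) + a s.re s.im²`, which is positive.
-/

namespace Complex

theorem re_mul_im_eq_of_sq_eq_sq_add_ofReal {γ z : ℂ} {r : ℝ} (h : γ ^ 2 = z ^ 2 + r) :
    γ.re * γ.im = z.re * z.im := by
  have him := congrArg im h
  simp only [sq, mul_im, add_im, ofReal_im, add_zero] at him
  linarith

theorem re_div_pos_iff {z w : ℂ} (hw : w ≠ 0) :
    0 < (z / w).re ↔ 0 < z.re * w.re + z.im * w.im := by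
  rw [div_re, ← add_div, div_pos_iff_of_pos_right (normSq_pos.2 hw)]

theorem re_div_ofReal_mul_add_ofReal_pos {γ s : ℂ} (hγ : 0 < γ.re)
    (hγs : γ.re * γ.im = s.re * s.im) (hs : 0 ≤ s.re) {a b : ℝ} (ha : 0 ≤ a) (hb : 0 < b) :
    0 < (γ / (a * s + b)).re := by
  have hwre : 0 < a * s.re + b := by positivity
  have hw : (a * s + b : ℂ) ≠ 0 := fun h => by
    have := congrArg re h
    simp only [add_re, re_ofReal_mul, ofReal_re, zero_re] at this
    linarith
  rw [re_div_pos_iff hw]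
  simp only [add_re, add_im, re_ofReal_mul, im_ofReal_mul, ofReal_re, ofReal_im, add_zero]
  have hscaled : γ.re * (γ.re * (a * s.re + b) + γ.im * (a * s.im))
      = γ.re ^ 2 * (a * s.re + b) + a * s.re * s.im ^ 2 := by
    linear_combination (a * s.im) * hγs
  refine pos_of_mul_pos_right (hscaled ▸ ?_) hγ.le
  positivity

end Complex

theorem stmt7 (s γ : ℂ) (hs : 0 < s.re) (k : ℝ)
    (hγsq : γ ^ 2 = s ^ 2 + (k : ℂ) ^ 2) (hγre : 0 < γ.re)
    (a b : ℝ) (ha : 0 < a) (hb : 0 < b) :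
    0 < (γ / ((a : ℂ) * s + (b : ℂ))).re := by
  have hγs : γ.re * γ.im = s.re * s.im :=
    Complex.re_mul_im_eq_of_sq_eq_sq_add_ofReal (r := k ^ 2) (by push_cast; exact hγsq)
  exact Complex.re_div_ofReal_mul_add_ofReal_pos hγre hγs hs.le ha.le hb
end

section
/- For every N ∈ ℕ, the polynomial p_N(z) = ₁F₁(-N; -2N; z) = ∑_{n=0}^{N} (z^n/n!)·((N!·(2N-n)!)/((N-n)!·(2N)!)) satisfies the Padé property: exp(z)·p_N(-z) - p_N(z) has a zero of order at least 2N+1 at z = 0 (i.e., its k-th derivative at 0 vanishes for all k ≤ 2N). -/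
open Finset

/-- `p N z = ₁F₁(-N; -2N; z)`, the numerator polynomial of the `[N/N]` Padé
approximant of `exp`. -/
noncomputable def padeP (N : ℕ) (z : ℂ) : ℂ :=
  ∑ n ∈ Finset.range (N + 1),
    z ^ n / (Nat.factorial n : ℂ) *
      (((Nat.factorial N : ℂ) * (Nat.factorial (2 * N - n) : ℂ)) /
       ((Nat.factorial (N - n) : ℂ) * (Nat.factorial (2 * N) : ℂ)))

/-!
For `k ≤ 2N` the `k`-th derivative of `padeP N` at `0` is `C(2N - k, N) / C(2N, N)` (zero for
`N < k`). By Leibniz's rule the `k`-th derivative of `exp z * padeP N (-z)` at `0` is then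
`∑ i ≤ k, (-1)^(k-i) C(k,i) C(2N - k + i, N) / C(2N, N)`, which is the `k`-th forward difference
of `x ↦ C(x, N)` at `x = 2N - k`, divided by `C(2N, N)`. That difference is `C(2N - k, N - k)` for
`k ≤ N` and `0` for `k > N`: in both cases exactly `C(2N - k, N)`.
-/

open Nat Function
open scoped fwdDiff

lemma fwdDiff_iter_choose_apply (N k x : ℕ) :
    (Δ_[1])^[k] (fun x ↦ x.choose N : ℕ → ℤ) x
      = if k ≤ N then x.choose (N - k) else 0 := by
  split_ifs with hk
  · obtain ⟨j, rfl⟩ := Nat.exists_eq_add_of_le hk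
    simp [fwdDiff_iter_choose]
  · obtain ⟨m, rfl⟩ := Nat.exists_eq_add_of_lt (not_le.mp hk)
    have h := fwdDiff_iter_choose 0 N
    rw [add_zero] at h
    rw [show N + m + 1 = m + 1 + N by ring, iterate_add_apply, h, iterate_succ_apply]
    simp [fwdDiff_iter_eq_sum_shift]

lemma sum_neg_one_pow_mul_choose_mul_choose_add (N k x : ℕ) :
    ∑ i ∈ range (k + 1), (-1 : ℤ) ^ (k - i) * k.choose i * (x + i).choose N
      = if k ≤ N then x.choose (N - k) else 0 := by
  rw [← fwdDiff_iter_choose_apply, fwdDiff_iter_eq_sum_shift]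
  simp

lemma iteratedDeriv_cexp_mul_comp_neg_zero {f : ℂ → ℂ} {k : ℕ} (hf : ContDiff ℂ k f) :
    iteratedDeriv k (fun z ↦ Complex.exp z * f (-z)) 0
      = ∑ i ∈ range (k + 1), (-1) ^ (k - i) * k.choose i * iteratedDeriv (k - i) f 0 := by
  rw [iteratedDeriv_fun_mul (f := Complex.exp) (g := fun z ↦ f (-z)) (by fun_prop)
    (by fun_prop)]
  refine sum_congr rfl fun i _ ↦ ?_
  simp [iteratedDeriv_eq_iterate, Complex.iter_deriv_exp, iteratedDeriv_comp_neg]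
  ring

@[fun_prop]
lemma contDiff_padeP (N : ℕ) {n : WithTop ℕ∞} : ContDiff ℂ n (padeP N) := by
  unfold padeP
  fun_prop

lemma iteratedDeriv_padeP_zero {N k : ℕ} (hk : k ≤ 2 * N) :
    iteratedDeriv k (padeP N) 0 = ((2 * N - k).choose N : ℂ) / (2 * N).choose N := by
  unfold padeP
  rw [iteratedDeriv_fun_sum (fun i _ ↦ by fun_prop)]
  simp only [iteratedDeriv_mul_const_field, iteratedDeriv_div_const, iteratedDeriv_fun_pow_zero,
    Nat.cast_ite, cast_zero, ite_div, zero_div, ite_mul, zero_mul, sum_ite_eq, mem_range]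
  split_ifs with hkN
  · rw [div_self (cast_ne_zero.mpr (factorial_ne_zero k)), one_mul,
      cast_choose ℂ (by omega : N ≤ 2 * N - k), cast_choose ℂ (by omega : N ≤ 2 * N),
      show 2 * N - k - N = N - k by omega, show 2 * N - N = N by omega]
    field_simp
  · rw [choose_eq_zero_of_lt (by omega), cast_zero, zero_div]

theorem stmt10 (N : ℕ) :
    ∀ k ≤ 2 * N,
      iteratedDeriv k (fun z : ℂ => Complex.exp z * padeP N (-z) - padeP N z) 0 = 0 := by
  intro k hk
  rw [iteratedDeriv_fun_sub (by fun_prop) (by fun_prop),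
    iteratedDeriv_cexp_mul_comp_neg_zero (contDiff_padeP N), iteratedDeriv_padeP_zero hk,
    sub_eq_zero]
  have hterm : ∀ i ∈ range (k + 1),
      (-1) ^ (k - i) * (k.choose i : ℂ) * iteratedDeriv (k - i) (padeP N) 0
        = (-1) ^ (k - i) * k.choose i * (2 * N - k + i).choose N / (2 * N).choose N := by
    intro i hi
    rw [iteratedDeriv_padeP_zero (by omega), show 2 * N - (k - i) = 2 * N - k + i by grind]
    ring
  have hfwdDiff := congrArg (Int.cast : ℤ → ℂ)
    (sum_neg_one_pow_mul_choose_mul_choose_add N k (2 * N - k))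
  push_cast at hfwdDiff
  rw [sum_congr rfl hterm, ← sum_div, hfwdDiff]
  split_ifs with hkN
  · rw [choose_symm_of_eq_add (b := N) (by omega)]
  · rw [choose_eq_zero_of_lt (by omega : 2 * N - k < N), cast_zero, zero_div]
end
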